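/- Let e: ℝ → ℂ be a heteroclinic orbit of W connecting two distinct zeros a^± of f, i.e. a C² solution of e''(x) = ∇W(e(x)) with lim_{x→±∞} e(x) = a^±, f(a^±) = 0, a^− ≠ a^+, and lim_{x→±∞} e'(x) = 0, and let m ∈ ℂ, |m| = 1, be such that e'(x) = √2·m·conj(f(e(x))) for all x. Let h: ℝ → ℂ be a C² map such that h and h' are square-integrable on ℝ, h(x) → 0 and h'(x) → 0 as x → ±∞, and h''(x) = D²W(e(x))·h(x) for all x ∈ ℝ (the Hessian acting as a real-linear map). Then h'(x) = √2·m·conj( f'(e(x))·h(x) ) for all x ∈ ℝ. -/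

import Mathlib

/-!
The Hessian of `W = |f|²` acts by `D²W(z) v = 2 (|f'(z)|² v + f(z) conj (f''(z)) conj v)`.
Put `a = √2 m` (so `a · conj a = 2`) and `c = a · conj (f' ∘ e)`. Differentiating along the orbit
with `e' = a · conj (f ∘ e)` gives `c' = 2 (f ∘ e) · conj (f'' ∘ e)`, so the linearized equation
reads `h'' = c' · conj h + |c|² h`, i.e. `(d/dx + c conj)(d/dx - c conj) h = 0`. Hence
`u = h' - c · conj h` solves `u' = -c · conj u`, and `ψ = Re (conj h · u)` satisfies `ψ' = |u|²`.
So `ψ` is monotone, and since `h, h' → 0` while `c` stays bounded at `±∞`, `ψ` vanishes at both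
ends; thus `ψ ≡ 0`, `u ≡ 0`, which is the claim `h' = c · conj h`.
-/

open MeasureTheory Complex Filter

/-- `W(z) = |f(z)|²` as a function of two real variables. -/
noncomputable def W (f : ℂ → ℂ) (z : ℂ) : ℝ := ‖f z‖ ^ 2

open ComplexConjugate Topology

section HessianOfW

variable {f : ℂ → ℂ}

noncomputable def reMulL : ℂ →L[ℝ] ℂ →L[ℝ] ℝ :=
  (ContinuousLinearMap.compL ℝ ℂ ℂ ℝ reCLM).comp (ContinuousLinearMap.mul ℝ ℂ)

@[simp] lemma reMulL_apply (a k : ℂ) : reMulL a k = (a * k).re := rfl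

lemma hasFDerivAt_W (hf : Differentiable ℂ f) (z : ℂ) :
    HasFDerivAt (W f) (reMulL (2 * conj (f z) * deriv f z)) z := by
  have hWf : W f = fun w => (conj (f w) * f w).re := by
    funext w; simp only [W, Complex.sq_norm, mul_comm, mul_conj, ofReal_re]
  have hfz := (hf z).hasDerivAt.complexToReal_fderiv
  rw [hWf]
  refine (reCLM.hasFDerivAt.comp z (hfz.star.mul' hfz)).congr_fderiv ?_
  ext v
  simp only [ContinuousLinearMap.comp_apply, add_apply, smul_apply, one_apply_eq_self,
    op_smul_eq_smul, smul_eq_mul, ContinuousLinearEquiv.coe_coe, starL'_apply, star_def,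
    reMulL_apply, reCLM_apply, map_add, map_mul, mul_re, mul_im, conj_re, conj_im, re_ofNat,
    im_ofNat]
  ring

lemma fderiv_fderiv_W_apply (hf : Differentiable ℂ f) (z v k : ℂ) :
    fderiv ℝ (fderiv ℝ (W f)) z v k
      = (conj (2 * (deriv f z * conj (deriv f z) * v
          + f z * conj (deriv (deriv f) z) * conj v)) * k).re := by
  have hfz := (hf z).hasDerivAt.complexToReal_fderiv
  have hf'z := (hf.deriv z).hasDerivAt.complexToReal_fderiv
  have hD : HasFDerivAt (fun w => reMulL (2 * conj (f w) * deriv f w)) _ z :=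
    reMulL.hasFDerivAt.comp z ((hfz.star.const_mul 2).mul' hf'z)
  rw [show fderiv ℝ (W f) = _ from funext fun w => (hasFDerivAt_W hf w).fderiv, hD.fderiv]
  simp only [ContinuousLinearMap.comp_apply, add_apply, smul_apply, one_apply_eq_self,
    op_smul_eq_smul, smul_eq_mul, ContinuousLinearEquiv.coe_coe, starL'_apply, star_def,
    reMulL_apply, map_add, map_mul, mul_re, mul_im, add_re, add_im, conj_re, conj_im, re_ofNat,
    im_ofNat]
  ring

end HessianOfW

lemma eq_of_forall_re_conj_mul_eq {a b : ℂ} (hab : ∀ k, (conj a * k).re = (conj b * k).re) :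
    a = b :=
  ext_inner_right ℝ fun k => by simpa [Complex.inner, mul_comm] using hab k

lemma sqrt_two_mul_mul_conj {m : ℂ} (hm : ‖m‖ = 1) :
    (Real.sqrt 2 * m : ℂ) * conj (Real.sqrt 2 * m) = 2 := by
  rw [mul_conj, normSq_eq_norm_sq, norm_mul, hm, norm_real, Real.norm_eq_abs,
    abs_of_nonneg (Real.sqrt_nonneg 2)]
  norm_num

lemma hasDerivAt_mul_conj_deriv_comp {f : ℂ → ℂ} (hf : Differentiable ℂ f) {e : ℝ → ℂ} {a : ℂ}
    (ha : a * conj a = 2) {x : ℝ} (he : HasDerivAt e (a * conj (f (e x))) x) :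
    HasDerivAt (fun y => a * conj (deriv f (e y)))
      (2 * f (e x) * conj (deriv (deriv f) (e x))) x := by
  refine (((hf.deriv (e x)).hasDerivAt.comp x he).star.const_mul a).congr_deriv ?_
  simp only [star_def, map_mul, conj_conj]
  linear_combination (f (e x) * conj (deriv (deriv f) (e x))) * ha

section FirstOrderFactorization

variable {c c' h h' u : ℝ → ℂ} {x : ℝ}

lemma hasDerivAt_re_conj_mul (hh : HasDerivAt h (u x + c x * conj (h x)) x)
    (hu : HasDerivAt u (-c x * conj (u x)) x) :
    HasDerivAt (fun y => (conj (h y) * u y).re) (normSq (u x)) x := by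
  refine (reCLM.hasFDerivAt.comp_hasDerivAt x (hh.star.mul hu)).congr_deriv ?_
  simp only [star_def, map_add, map_mul, conj_conj, reCLM_apply,
    mul_re, add_re, add_im, mul_im, neg_re, neg_im, conj_re, conj_im, normSq_apply]
  ring

lemma hasDerivAt_sub_mul_conj (hc : HasDerivAt c (c' x) x) (hh : HasDerivAt h (h' x) x)
    (hh' : HasDerivAt h' (c' x * conj (h x) + c x * conj (c x) * h x) x) :
    HasDerivAt (fun y => h' y - c y * conj (h y)) (-c x * conj (h' x - c x * conj (h x))) x := by
  refine (hh'.sub (hc.mul hh.star)).congr_deriv ?_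
  simp only [star_def, map_sub, map_mul, conj_conj]
  ring

theorem eq_mul_conj_of_hasDerivAt_of_tendsto_zero
    (hc : ∀ x, HasDerivAt c (c' x) x) (hh : ∀ x, HasDerivAt h (h' x) x)
    (hh' : ∀ x, HasDerivAt h' (c' x * conj (h x) + c x * conj (c x) * h x) x)
    (hcB : IsBoundedUnder (· ≤ ·) atBot (norm ∘ c)) (hcT : IsBoundedUnder (· ≤ ·) atTop (norm ∘ c))
    (hhB : Tendsto h atBot (𝓝 0)) (hhT : Tendsto h atTop (𝓝 0))
    (hh'B : Tendsto h' atBot (𝓝 0)) (hh'T : Tendsto h' atTop (𝓝 0)) (x : ℝ) :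
    h' x = c x * conj (h x) := by
  set u := fun y => h' y - c y * conj (h y)
  set ψ := fun y => (conj (h y) * u y).re
  have hψ (y : ℝ) : HasDerivAt ψ (normSq (u y)) y :=
    hasDerivAt_re_conj_mul (by simpa [u] using hh y) (hasDerivAt_sub_mul_conj (hc y) (hh y) (hh' y))
  have hψ_tendsto {l : Filter ℝ} (hcl : IsBoundedUnder (· ≤ ·) l (norm ∘ c))
      (hhl : Tendsto h l (𝓝 0)) (hh'l : Tendsto h' l (𝓝 0)) : Tendsto ψ l (𝓝 0) := by
    have hconj : Tendsto (fun y => conj (h y)) l (𝓝 0) := by simpa using hhl.star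
    have hu : Tendsto u l (𝓝 0) := by
      simpa using hh'l.sub (isBoundedUnder_le_mul_tendsto_zero hcl hconj)
    exact (continuous_re.tendsto 0).comp (by simpa using hconj.mul hu)
  have hmono : Monotone ψ :=
    monotone_of_hasDerivAt_nonneg hψ fun y => normSq_nonneg _
  have hψ0 : ψ = 0 := funext fun y =>
    le_antisymm (hmono.ge_of_tendsto (hψ_tendsto hcT hhT hh'T) y)
      (hmono.le_of_tendsto (hψ_tendsto hcB hhB hh'B) y)
  have hu0 : normSq (u x) = 0 := (hψ x).unique (hψ0 ▸ hasDerivAt_const x 0)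
  exact sub_eq_zero.mp (normSq_eq_zero.mp hu0)

end FirstOrderFactorization

theorem statement12_general (f : ℂ → ℂ) (hf : Differentiable ℂ f)
    (e : ℝ → ℂ) (he : ContDiff ℝ 2 e)
    (aminus aplus : ℂ)
    (hlimB : Tendsto e atBot (nhds aminus)) (hlimT : Tendsto e atTop (nhds aplus))
    (m : ℂ) (hm : ‖m‖ = 1)
    (hem : ∀ x : ℝ, deriv e x = (Real.sqrt 2 : ℂ) * m * (starRingEnd ℂ) (f (e x)))
    (h : ℝ → ℂ) (hh : ContDiff ℝ 2 h)
    (hh0B : Tendsto h atBot (nhds 0)) (hh0T : Tendsto h atTop (nhds 0))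
    (hh1B : Tendsto (deriv h) atBot (nhds 0)) (hh1T : Tendsto (deriv h) atTop (nhds 0))
    (hlin : ∀ x : ℝ, ∀ k : ℂ,
      ((starRingEnd ℂ) (deriv (deriv h) x) * k).re
        = fderiv ℝ (fderiv ℝ (W f)) (e x) (h x) k) :
    ∀ x : ℝ, deriv h x
      = (Real.sqrt 2 : ℂ) * m * (starRingEnd ℂ) (deriv f (e x) * h x) := by
  set a : ℂ := Real.sqrt 2 * m
  have ha : a * conj a = 2 := sqrt_two_mul_mul_conj hm
  set c := fun x => a * conj (deriv f (e x))
  have hc (x : ℝ) : HasDerivAt c (2 * f (e x) * conj (deriv (deriv f) (e x))) x :=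
    hasDerivAt_mul_conj_deriv_comp hf ha (hem x ▸ (he.differentiable two_ne_zero x).hasDerivAt)
  have hh'' (x : ℝ) : HasDerivAt (deriv h)
      (2 * f (e x) * conj (deriv (deriv f) (e x)) * conj (h x) + c x * conj (c x) * h x) x := by
    have hlin' : deriv (deriv h) x = 2 * (deriv f (e x) * conj (deriv f (e x)) * h x
        + f (e x) * conj (deriv (deriv f) (e x)) * conj (h x)) :=
      eq_of_forall_re_conj_mul_eq fun k => (hlin x k).trans (fderiv_fderiv_W_apply hf _ _ k)
    refine ((hh.iterate_deriv' 1 1).differentiable one_ne_zero x).hasDerivAt.congr_deriv ?_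
    simp only [c, Function.iterate_one, map_mul, conj_conj]
    linear_combination hlin' - (deriv f (e x) * conj (deriv f (e x)) * h x) * ha
  have hc_cont : Continuous fun z => a * conj (deriv f z) :=
    continuous_const.mul (continuous_conj.comp hf.deriv.continuous)
  intro x
  rw [eq_mul_conj_of_hasDerivAt_of_tendsto_zero hc
    (fun x => (hh.differentiable two_ne_zero x).hasDerivAt) hh''
    ((hc_cont.tendsto _).comp hlimB).norm.isBoundedUnder_le
    ((hc_cont.tendsto _).comp hlimT).norm.isBoundedUnder_le hh0B hh0T hh1B hh1T x, map_mul]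
  ring

/-- Let `e` be a heteroclinic orbit of `W` connecting two distinct zeros `a^±` of
`f` (a `C²` solution of `e'' = ∇W(e)` with `e → a^±`, `e' → 0` at `±∞`), and let
`m`, `|m| = 1`, be such that `e' = √2 m conj(f(e))`.  If `h` is a `C²` map with
`h, h' ∈ L²`, `h → 0`, `h' → 0` at `±∞`, solving the linearized equation
`h'' = D²W(e)·h` (the Hessian acting as a real-linear map, characterized by
`⟨h'', k⟩_{ℝ²} = Re(conj(h'') k) = D²W(e)(h, k)` for all `k`), then
`h' = √2 m conj(f'(e) h)` everywhere. -/
theorem statement12 (f : ℂ → ℂ) (hf : Differentiable ℂ f)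
    (e : ℝ → ℂ) (he : ContDiff ℝ 2 e)
    (hODE : ∀ x : ℝ, deriv (deriv e) x = gradient (W f) (e x))
    (aminus aplus : ℂ) (hfm : f aminus = 0) (hfp : f aplus = 0) (hne : aminus ≠ aplus)
    (hlimB : Tendsto e atBot (nhds aminus)) (hlimT : Tendsto e atTop (nhds aplus))
    (hlimB' : Tendsto (deriv e) atBot (nhds 0)) (hlimT' : Tendsto (deriv e) atTop (nhds 0))
    (m : ℂ) (hm : ‖m‖ = 1)
    (hem : ∀ x : ℝ, deriv e x = (Real.sqrt 2 : ℂ) * m * (starRingEnd ℂ) (f (e x)))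
    (h : ℝ → ℂ) (hh : ContDiff ℝ 2 h)
    (hL2 : MemLp h 2 volume) (hL2' : MemLp (deriv h) 2 volume)
    (hh0B : Tendsto h atBot (nhds 0)) (hh0T : Tendsto h atTop (nhds 0))
    (hh1B : Tendsto (deriv h) atBot (nhds 0)) (hh1T : Tendsto (deriv h) atTop (nhds 0))
    (hlin : ∀ x : ℝ, ∀ k : ℂ,
      ((starRingEnd ℂ) (deriv (deriv h) x) * k).re
        = fderiv ℝ (fderiv ℝ (W f)) (e x) (h x) k) :
    ∀ x : ℝ, deriv h x
      = (Real.sqrt 2 : ℂ) * m * (starRingEnd ℂ) (deriv f (e x) * h x) :=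
  statement12_general f hf e he aminus aplus hlimB hlimT m hm hem h hh hh0B hh0T hh1B hh1T hlin
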